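/- Let Z₁, Z₂, Z₃ be independent standard normal random variables and σ > 0, γ > 0. Then the law of γ Z₂/Z₁ + σ Z₃ equals the law of √(σ² + γ²/Z₁'²) · Z, where Z₁', Z are independent standard normals; equivalently, both have the centered Voigt(γ, σ²) distribution whose density is the convolution of the Cauchy(0, γ) and N(0, σ²) densities. -/

import Mathlib

open MeasureTheory ProbabilityTheory Real

/-- The centered Voigt(γ, σ²) density: the convolution of the Cauchy(0, γ) density with
the N(0, σ²) density. -/
noncomputable def voigtDensity (σ γ : ℝ) (u : ℝ) : ℝ :=
  ∫ x : ℝ, (γ / (π * (x ^ 2 + γ ^ 2))) *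
    (1 / (σ * Real.sqrt (2 * π)) * Real.exp (-(u - x) ^ 2 / (2 * σ ^ 2)))

/-!
Conditionally on `Z₁ = x`, the variable `γ Z₂ / x + σ Z₃` is `N(0, σ² + γ² / x²)`, which is also
the law of `√(σ² + γ² / x²) Z`; integrating over `x` gives the first identity.
For the density, `γ Z₂ / Z₁` is Cauchy(0, γ): mixing the `N(0, γ² / x²)` densities against the
standard normal in `x` leaves `(2πγ)⁻¹ ∫ |x| exp(-(γ² + t²) x² / (2γ²)) dx = γ / (π (γ² + t²))`.
Adding the independent `σ Z₃` convolves this law with `N(0, σ²)`, giving the Voigt law.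
-/

open scoped NNReal ENNReal

namespace MeasureTheory.Measure

variable {α β β' δ : Type*} [MeasurableSpace α] [MeasurableSpace β] [MeasurableSpace β']
  [MeasurableSpace δ] {μ : Measure α} {ν : Measure β}

theorem map_prod_eq_of_ae_map_eq {ν' : Measure β'} [SFinite ν] [SFinite ν'] {f : α × β → δ}
    {g : α × β' → δ} (hf : Measurable f) (hg : Measurable g)
    (h : ∀ᵐ x ∂μ, ν.map (fun y ↦ f (x, y)) = ν'.map (fun y ↦ g (x, y))) :
    (μ.prod ν).map f = (μ.prod ν').map g := by
  ext s hs
  rw [map_apply hf hs, map_apply hg hs, prod_apply (hf hs), prod_apply (hg hs)]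
  refine lintegral_congr_ae (h.mono fun x hx ↦ ?_)
  have := congrArg (· s) hx
  rwa [map_apply (by fun_prop) hs, map_apply (by fun_prop) hs] at this

theorem map_prod_eq_withDensity_of_ae_map_eq {ρ : Measure δ} [SFinite μ] [SFinite ν]
    [SFinite ρ] {f : α × β → δ} (hf : Measurable f) {p : α → δ → ℝ≥0∞}
    (hp : Measurable (Function.uncurry p))
    (h : ∀ᵐ x ∂μ, ν.map (fun y ↦ f (x, y)) = ρ.withDensity (p x)) :
    (μ.prod ν).map f = ρ.withDensity (fun t ↦ ∫⁻ x, p x t ∂μ) := by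
  ext s hs
  rw [map_apply hf hs, prod_apply (hf hs), withDensity_apply _ hs]
  calc ∫⁻ x, ν (Prod.mk x ⁻¹' (f ⁻¹' s)) ∂μ = ∫⁻ x, ∫⁻ t in s, p x t ∂ρ ∂μ := by
        refine lintegral_congr_ae (h.mono fun x hx ↦ ?_)
        dsimp only
        rw [← withDensity_apply _ hs, ← hx, map_apply (by fun_prop) hs]
        rfl
    _ = ∫⁻ t in s, ∫⁻ x, p x t ∂μ ∂ρ := lintegral_lintegral_swap hp.aemeasurable

theorem map_prod_add_eq_conv_map {M : Type*} [AddMonoid M] [MeasurableSpace M]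
    [MeasurableAdd₂ M] [SFinite μ] [SFinite ν] {f : α → M} {g : β → M} (hf : Measurable f)
    (hg : Measurable g) :
    (μ.prod ν).map (fun p ↦ f p.1 + g p.2) = μ.map f ∗ ν.map g := by
  rw [Measure.conv, map_prod_map μ ν hf hg, map_map measurable_add (hf.prodMap hg)]
  rfl

end MeasureTheory.Measure

theorem integral_abs_mul_exp_neg_mul_sq {b : ℝ} (hb : 0 < b) :
    ∫ x : ℝ, |x| * exp (-b * x ^ 2) = b⁻¹ := by
  have h := integral_comp_abs (f := fun x ↦ x * exp (-b * x ^ 2))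
  simp only [sq_abs] at h
  rw [h, setIntegral_congr_fun measurableSet_Ioi
      (g := fun x ↦ x ^ (1 : ℝ) * exp (-b * x ^ (2 : ℝ))),
    integral_rpow_mul_exp_neg_mul_rpow two_pos (by norm_num) hb]
  · norm_num [Real.rpow_neg_one]
    ring
  · intro x _
    simp

namespace ProbabilityTheory

lemma gaussianPDFReal_le (m : ℝ) (v : ℝ≥0) (x : ℝ) :
    gaussianPDFReal m v x ≤ (√(2 * π * v))⁻¹ := by
  refine mul_le_of_le_one_right (by positivity) (exp_le_one_iff.2 ?_)
  exact div_nonpos_of_nonpos_of_nonneg (neg_nonpos.2 (sq_nonneg _)) (by positivity)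

lemma gaussianReal_zero_one_map_const_mul (c : ℝ) :
    (gaussianReal 0 1).map (c * ·) = gaussianReal 0 (c ^ 2).toNNReal := by
  rw [gaussianReal_map_const_mul, mul_zero, mul_one]
  congr 1
  ext
  simp [sq_nonneg]

lemma gaussianReal_zero_one_prod_map_linear (c d : ℝ) :
    ((gaussianReal 0 1).prod (gaussianReal 0 1)).map (fun p : ℝ × ℝ ↦ c * p.1 + d * p.2) =
      gaussianReal 0 (c ^ 2 + d ^ 2).toNNReal := by
  rw [Measure.map_prod_add_eq_conv_map (measurable_const_mul c) (measurable_const_mul d),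
    gaussianReal_zero_one_map_const_mul, gaussianReal_zero_one_map_const_mul,
    gaussianReal_conv_gaussianReal, add_zero, Real.toNNReal_add (sq_nonneg c) (sq_nonneg d)]

lemma gaussianReal_prod_map_mul_div_add_mul (σ γ x : ℝ) :
    ((gaussianReal 0 1).prod (gaussianReal 0 1)).map (fun y : ℝ × ℝ ↦ γ * y.1 / x + σ * y.2) =
      (gaussianReal 0 1).map (fun y ↦ √(σ ^ 2 + γ ^ 2 / x ^ 2) * y) := by
  simp_rw [mul_div_right_comm γ]
  rw [gaussianReal_zero_one_prod_map_linear, gaussianReal_zero_one_map_const_mul,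
    sq_sqrt (by positivity), div_pow, add_comm]

lemma gaussianPDFReal_mul_gaussianPDFReal_div_sq {γ : ℝ} (hγ : 0 < γ) (t x : ℝ) :
    gaussianPDFReal 0 1 x * gaussianPDFReal 0 ((γ / x) ^ 2).toNNReal t =
      (2 * π * γ)⁻¹ * (|x| * exp (-((γ ^ 2 + t ^ 2) / (2 * γ ^ 2)) * x ^ 2)) := by
  rcases eq_or_ne x 0 with rfl | hx
  · simp
  have hπ : √(2 * π) ^ 2 = 2 * π := sq_sqrt (by positivity)
  simp only [gaussianPDFReal, Real.coe_toNNReal _ (sq_nonneg _), NNReal.coe_one, mul_one,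
    sub_zero, sqrt_mul (by positivity : (0 : ℝ) ≤ 2 * π), sqrt_sq_eq_abs, abs_div, abs_of_pos hγ]
  have hexp : -x ^ 2 / 2 + -t ^ 2 / (2 * (γ / x) ^ 2) =
      -((γ ^ 2 + t ^ 2) / (2 * γ ^ 2)) * x ^ 2 := by
    field_simp
    ring
  rw [mul_mul_mul_comm, ← exp_add, hexp]
  field_simp
  rw [hπ]

lemma lintegral_gaussianPDF_div_sq_eq_cauchyPDF {γ : ℝ} (hγ : 0 < γ) (t : ℝ) :
    ∫⁻ x, gaussianPDF 0 ((γ / x) ^ 2).toNNReal t ∂(gaussianReal 0 1) =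
      cauchyPDF 0 γ.toNNReal t := by
  have hb : 0 < (γ ^ 2 + t ^ 2) / (2 * γ ^ 2) := by positivity
  rw [gaussianReal_of_var_ne_zero _ one_ne_zero,
    lintegral_withDensity_eq_lintegral_mul _ (measurable_gaussianPDF 0 1) (by fun_prop)]
  simp only [Pi.mul_apply, gaussianPDF, ← ENNReal.ofReal_mul (gaussianPDFReal_nonneg _ _ _),
    gaussianPDFReal_mul_gaussianPDFReal_div_sq hγ]
  rw [← ofReal_integral_eq_lintegral_ofReal, integral_const_mul,
    integral_abs_mul_exp_neg_mul_sq hb, cauchyPDF_def, cauchyPDFReal_def, Real.coe_toNNReal _ hγ.le]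
  · congr 1
    field_simp
    ring
  · refine ((integrable_mul_exp_neg_mul_sq hb).norm.const_mul (2 * π * γ)⁻¹).congr
      (ae_of_all _ fun x ↦ ?_)
    simp [abs_of_pos (exp_pos _)]
  · exact ae_of_all _ fun x ↦ by positivity

lemma gaussianReal_prod_map_mul_div_eq_cauchyMeasure {γ : ℝ} (hγ : 0 < γ) :
    ((gaussianReal 0 1).prod (gaussianReal 0 1)).map (fun p : ℝ × ℝ ↦ γ * p.2 / p.1) =
      cauchyMeasure 0 γ.toNNReal := by
  have hp : Measurable (Function.uncurry fun x t ↦ gaussianPDF 0 ((γ / x) ^ 2).toNNReal t) := by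
    simp only [Function.uncurry_def, gaussianPDF, gaussianPDFReal]
    fun_prop
  rw [cauchyMeasure_of_scale_ne_zero _ (by simpa using hγ),
    Measure.map_prod_eq_withDensity_of_ae_map_eq (ρ := volume) (by fun_prop) hp]
  · simp_rw [lintegral_gaussianPDF_div_sq_eq_cauchyPDF hγ]
  · filter_upwards
      [(gaussianReal_absolutelyContinuous 0 one_ne_zero).ae_le (Measure.ae_ne volume 0)] with x hx
    simp_rw [mul_div_right_comm γ]
    rw [gaussianReal_zero_one_map_const_mul, gaussianReal_of_var_ne_zero]
    simpa using div_ne_zero hγ.ne' hx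

lemma voigtDensity_eq_integral {σ γ : ℝ} (hσ : 0 < σ) (hγ : 0 ≤ γ) (u : ℝ) :
    voigtDensity σ γ u =
      ∫ x, cauchyPDFReal 0 γ.toNNReal x * gaussianPDFReal 0 (σ ^ 2).toNNReal (u - x) := by
  unfold voigtDensity
  congr 1 with x
  rw [cauchyPDFReal_def, gaussianPDFReal, Real.coe_toNNReal _ hγ,
    Real.coe_toNNReal _ (sq_nonneg σ), sqrt_mul (by positivity : (0 : ℝ) ≤ 2 * π) (σ ^ 2),
    sqrt_sq hσ.le, sub_zero, sub_zero]
  field_simp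

lemma cauchyMeasure_conv_gaussianReal {σ γ : ℝ} (hσ : 0 < σ) (hγ : 0 < γ) :
    cauchyMeasure 0 γ.toNNReal ∗ gaussianReal 0 (σ ^ 2).toNNReal =
      volume.withDensity (fun u ↦ ENNReal.ofReal (voigtDensity σ γ u)) := by
  have hγ' : γ.toNNReal ≠ 0 := by simpa using hγ
  rw [cauchyMeasure_of_scale_ne_zero _ hγ', gaussianReal_of_var_ne_zero _ (by simpa using hσ.ne'),
    conv_withDensity_eq_lconvolution (measurable_cauchyPDF _ _) (measurable_gaussianPDF _ _)]
  congr 1 with u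
  rw [lconvolution_def, voigtDensity_eq_integral hσ hγ.le, ofReal_integral_eq_lintegral_ofReal]
  · congr 1 with x
    rw [ENNReal.ofReal_mul (cauchyPDF_pos _ hγ' _).le, neg_add_eq_sub]
    rfl
  · refine (integrable_cauchyPDFReal 0).mul_bdd
      ((measurable_gaussianPDFReal _ _).comp
        (measurable_const.sub measurable_id)).aestronglyMeasurable
      (ae_of_all _ fun x ↦ (norm_of_nonneg (gaussianPDFReal_nonneg _ _ _)).trans_le
        (gaussianPDFReal_le _ _ _))
  · exact ae_of_all _ fun x ↦ mul_nonneg (cauchyPDF_pos _ hγ' _).le (gaussianPDFReal_nonneg _ _ _)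

end ProbabilityTheory

theorem voigt_product_formula (σ γ : ℝ) (hσ : 0 < σ) (hγ : 0 < γ) :
    ((gaussianReal 0 1).prod ((gaussianReal 0 1).prod (gaussianReal 0 1))).map
        (fun z : ℝ × ℝ × ℝ => γ * z.2.1 / z.1 + σ * z.2.2) =
      ((gaussianReal 0 1).prod (gaussianReal 0 1)).map
        (fun z : ℝ × ℝ => Real.sqrt (σ ^ 2 + γ ^ 2 / z.1 ^ 2) * z.2) ∧
    ((gaussianReal 0 1).prod ((gaussianReal 0 1).prod (gaussianReal 0 1))).map
        (fun z : ℝ × ℝ × ℝ => γ * z.2.1 / z.1 + σ * z.2.2) =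
      volume.withDensity (fun u : ℝ => ENNReal.ofReal (voigtDensity σ γ u)) := by
  set μ := gaussianReal 0 1
  have hF : Measurable fun z : ℝ × ℝ × ℝ ↦ γ * z.2.1 / z.1 + σ * z.2.2 := by fun_prop
  refine ⟨Measure.map_prod_eq_of_ae_map_eq hF (by fun_prop)
    (ae_of_all _ fun x ↦ gaussianReal_prod_map_mul_div_add_mul σ γ x), ?_⟩
  calc (μ.prod (μ.prod μ)).map (fun z ↦ γ * z.2.1 / z.1 + σ * z.2.2)
      = ((μ.prod μ).prod μ).map (fun q ↦ γ * q.1.2 / q.1.1 + σ * q.2) := by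
        rw [← (measurePreserving_prodAssoc μ μ μ).map_eq, Measure.map_map hF (by fun_prop)]
        rfl
    _ = (μ.prod μ).map (fun p ↦ γ * p.2 / p.1) ∗ μ.map (σ * ·) :=
        Measure.map_prod_add_eq_conv_map (f := fun p : ℝ × ℝ ↦ γ * p.2 / p.1) (by fun_prop)
          (measurable_const_mul σ)
    _ = cauchyMeasure 0 γ.toNNReal ∗ gaussianReal 0 (σ ^ 2).toNNReal := by
        rw [gaussianReal_prod_map_mul_div_eq_cauchyMeasure hγ, gaussianReal_zero_one_map_const_mul]
    _ = volume.withDensity (fun u ↦ ENNReal.ofReal (voigtDensity σ γ u)) :=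
        cauchyMeasure_conv_gaussianReal hσ hγ
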